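/- Let f̃, g̃ ∈ K(z) be rational functions of positive degree. Then the function P^1(K) → [0,1] given by z ↦ [f̃(z), g̃(z)]_{P^1} extends to a continuous function P^1_Berk(K) → [0,1]; this extension is unique since P^1(K) is dense in P^1_Berk(K). -/

import Mathlib

open scoped Classical

open Polynomial Filter MeasureTheory Topology

variable (K : Type*) [NontriviallyNormedField K] [IsAlgClosed K] [CompleteSpace K]
  [IsUltrametricDist K]

/-- The degree of a rational function: max of degrees of numerator and denominator. -/
noncomputable def rdeg (h : RatFunc K) : ℕ := max h.num.natDegree h.denom.natDegree

/-- Canonical homogeneous coordinates of a point of `P^1(K) = K ∪ {∞}`. -/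
noncomputable def homCoord : OnePoint K → K × K :=
  OnePoint.rec (1, 0) (fun a => (a, 1))

/-- The (normalized) chordal metric on `P^1(K)`:
`[z,w] = |z0*w1 - z1*w0| / (max(|z0|,|z1|) * max(|w0|,|w1|))`. -/
noncomputable def chordal (x y : OnePoint K) : ℝ :=
  ‖(homCoord K x).1 * (homCoord K y).2 - (homCoord K x).2 * (homCoord K y).1‖ /
    (max ‖(homCoord K x).1‖ ‖(homCoord K x).2‖ * max ‖(homCoord K y).1‖ ‖(homCoord K y).2‖)

/-- The action of a rational function on the projective line `P^1(K) = K ∪ {∞}`. -/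
noncomputable def evalP1 (h : RatFunc K) : OnePoint K → OnePoint K :=
  OnePoint.rec
    (if h.denom.natDegree < h.num.natDegree then OnePoint.infty
      else ((h.num.coeff h.denom.natDegree / h.denom.leadingCoeff : K) : OnePoint K))
    (fun a => if h.denom.eval a = 0 then OnePoint.infty
      else ((h.num.eval a / h.denom.eval a : K) : OnePoint K))

/-- Composition of rational functions. -/
noncomputable def rcomp (f g : RatFunc K) : RatFunc K :=
  RatFunc.eval (algebraMap K (RatFunc K)) g f

/-- Iterates of a rational function, as rational functions. -/
noncomputable def riter (f : RatFunc K) : ℕ → RatFunc K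
  | 0 => RatFunc.X
  | n + 1 => rcomp K f (riter f n)

/-- The Berkovich affine line `A^1(K)`: multiplicative seminorms on `K[z]`
whose restriction to `K` is the absolute value of `K`. -/
structure BerkA1 where
  /-- the seminorm, as a function on polynomials -/
  toFun : Polynomial K → ℝ
  nonneg' : ∀ p, 0 ≤ toFun p
  map_mul' : ∀ p q, toFun (p * q) = toFun p * toFun q
  add_le' : ∀ p q, toFun (p + q) ≤ toFun p + toFun q
  restricts' : ∀ c : K, toFun (Polynomial.C c) = ‖c‖

/-- The topology of pointwise convergence on the Berkovich affine line. -/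
instance : TopologicalSpace (BerkA1 K) :=
  TopologicalSpace.induced BerkA1.toFun Pi.topologicalSpace

/-- The Berkovich projective line `P^1_Berk(K)`, the one-point compactification of the
Berkovich affine line. -/
abbrev BerkP1 := OnePoint (BerkA1 K)

/-- The evaluation seminorm `p ↦ ‖p(a)‖` attached to a classical point `a ∈ K`. -/
noncomputable def evalSeminorm (a : K) : BerkA1 K where
  toFun p := ‖p.eval a‖
  nonneg' p := norm_nonneg _
  map_mul' p q := by simp [norm_mul]
  add_le' p q := by simpa using norm_add_le (p.eval a) (q.eval a)
  restricts' c := by simp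

/-- The canonical embedding of the classical projective line `P^1(K) = K ∪ {∞}`
into the Berkovich projective line. -/
noncomputable def iota : OnePoint K → BerkP1 K :=
  OnePoint.map (evalSeminorm K)

noncomputable instance : MeasurableSpace (BerkP1 K) := borel _

instance : BorelSpace (BerkP1 K) := ⟨rfl⟩

/-- The support of a measure: points all of whose open neighborhoods have positive measure. -/
def msupport (μ : Measure (BerkP1 K)) : Set (BerkP1 K) :=
  {x | ∀ U : Set (BerkP1 K), IsOpen U → x ∈ U → 0 < μ U}

/-- Weak convergence of a sequence of measures on the Berkovich projective line:
integrals of every continuous real-valued function converge. -/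
def WeakTendsto (μs : ℕ → Measure (BerkP1 K)) (μ : Measure (BerkP1 K)) : Prop :=
  ∀ φ : C(BerkP1 K, ℝ),
    Tendsto (fun n => ∫ x, φ x ∂(μs n)) atTop (𝓝 (∫ x, φ x ∂μ))


/-!
On a seminorm `x`, write `f = f₁/f₀`, `g = g₁/g₀` in lowest terms and put
`Φ(x) = x(f₁g₀ - f₀g₁) / (max (x f₁) (x f₀) * max (x g₁) (x g₀))`; at `∞` take the chordal
ratio of the pairs of coefficients of degree `deg f`, `deg g`. At a classical point this is the
chordal distance, because the chordal ratio does not change when homogeneous coordinates are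
rescaled. Coprimality of `f₁, f₀` and of `g₁, g₀` keeps the denominator positive, so `Φ` is
continuous on the affine line. Near `∞`, dividing numerator and denominator by
`x(z)^(deg f + deg g)` shows continuity, since `x(p) / x(z)^d` tends to the norm of the degree-`d`
coefficient of `p` as `x(z) → ∞`, and the sets `{x(z) ≤ R}` are compact. The values lie in `[0,1]`
because every point of the Berkovich line inherits the ultrametric inequality from `K`.

Uniqueness is density of `P¹(K)`. Factoring into linear factors, a seminorm `x` is a continuous
function of its radii `c ↦ x(z - c)`, and finitely many radii are matched up to `ε` by `|a - c|`
for a suitable `a ∈ K`: take `a = b + t` with `b` minimising the radius and `|t|` slightly larger,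
which is possible because the value group of an algebraically closed field is dense.
-/

theorem le_of_forall_pow_le_succ_mul_pow {a b : ℝ} (hb : 0 ≤ b)
    (h : ∀ n : ℕ, a ^ n ≤ (n + 1) * b ^ n) : a ≤ b := by
  by_contra! hba
  rcases hb.eq_or_lt with rfl | hb
  · have := h 1
    norm_num at this
    linarith
  · obtain ⟨m, hm⟩ := Real.exists_natCast_add_one_lt_pow_of_one_lt ((one_lt_div hb).2 hba)
    rw [div_pow, lt_div_iff₀ (pow_pos hb m)] at hm
    exact (h m).not_gt hm

theorem isNonarchimedean_of_forall_map_natCast_le_one {F R : Type*} [CommRing R]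
    [FunLike F R ℝ] [MulRingSeminormClass F R ℝ] (f : F) (h : ∀ n : ℕ, f n ≤ 1) :
    IsNonarchimedean f := by
  intro a b
  set M := max (f a) (f b)
  have hM : 0 ≤ M := (apply_nonneg f a).trans (le_max_left _ _)
  refine le_of_forall_pow_le_succ_mul_pow hM fun n => ?_
  have hterm : ∀ k ∈ Finset.range (n + 1),
      f (a ^ k * b ^ (n - k) * (n.choose k : R)) ≤ M ^ n := by
    intro k hk
    rw [map_mul, map_mul, map_pow, map_pow,
      ← pow_mul_pow_sub M (Finset.mem_range_succ_iff.1 hk), ← mul_one (M ^ k * _)]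
    gcongr
    exacts [le_max_left _ _, le_max_right _ _, h _]
  calc f (a + b) ^ n = f ((a + b) ^ n) := (map_pow f _ n).symm
    _ ≤ ∑ k ∈ Finset.range (n + 1), f (a ^ k * b ^ (n - k) * (n.choose k : R)) := by
      rw [add_pow]
      exact Finset.le_sum_of_subadditive f (map_zero f).le (map_add_le_add f) _ _
    _ ≤ ∑ _k ∈ Finset.range (n + 1), M ^ n := Finset.sum_le_sum hterm
    _ = (n + 1) * M ^ n := by simp

theorem mem_closure_pi_of_forall_finset {ι β : Type*} [PseudoMetricSpace β] {v : ι → β}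
    {S : Set (ι → β)}
    (h : ∀ (T : Finset ι) (δ : ℝ), 0 < δ → ∃ w ∈ S, ∀ i ∈ T, dist (w i) (v i) < δ) :
    v ∈ closure S := by
  have hbasis := hasBasis_pi fun i => Metric.nhds_basis_ball (x := v i)
  rw [← nhds_pi] at hbasis
  rw [mem_closure_iff_nhds_basis hbasis]
  rintro ⟨T, ε⟩ ⟨hT, hε⟩
  have hδ : ∀ᶠ δ in 𝓝[>] (0 : ℝ), 0 < δ ∧ ∀ i ∈ T, δ < ε i :=
    Eventually.and self_mem_nhdsWithin <| nhdsWithin_le_nhds <|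
      (eventually_all_finite hT).2 fun i hi => eventually_lt_nhds (hε i hi)
  obtain ⟨δ, hδ₀, hδε⟩ := hδ.exists
  obtain ⟨w, hwS, hw⟩ := h hT.toFinset δ hδ₀
  exact ⟨w, hwS, fun i hi => (hw i (hT.mem_toFinset.2 hi)).trans (hδε i hi)⟩

section NormedField

variable {𝕜 : Type*} [NontriviallyNormedField 𝕜]

theorem exists_norm_mem_Ioo [IsAlgClosed 𝕜] {a b : ℝ} (ha : 0 < a) (hab : a < b) :
    ∃ t : 𝕜, ‖t‖ ∈ Set.Ioo a b := by
  obtain ⟨y, hy⟩ := NormedField.exists_one_lt_norm 𝕜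
  obtain ⟨m, hm⟩ := pow_unbounded_of_one_lt ‖y‖ ((one_lt_div ha).2 hab)
  have hm₀ : m ≠ 0 := by
    rintro rfl
    rw [pow_zero] at hm
    linarith
  obtain ⟨u, rfl⟩ := IsAlgClosed.exists_pow_nat_eq y (Nat.pos_of_ne_zero hm₀)
  rw [norm_pow] at hy hm
  have hu₁ : 1 < ‖u‖ := (one_lt_pow_iff_of_nonneg (norm_nonneg u) hm₀).1 hy
  have hu : ‖u‖ < b / a :=
    (pow_lt_pow_iff_left₀ (norm_nonneg u) (div_pos (ha.trans hab) ha).le hm₀).1 hm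
  -- successive powers of `‖u‖` grow by a factor below `b / a`, so one of them lands in `(a, b)`
  obtain ⟨n, hn₁, hn₂⟩ := exists_mem_Ico_zpow ha hu₁
  refine ⟨u ^ (n + 1), by rwa [norm_zpow], ?_⟩
  calc ‖u ^ (n + 1)‖ = ‖u‖ ^ n * ‖u‖ := by rw [norm_zpow, zpow_add_one₀ (by positivity)]
    _ ≤ a * ‖u‖ := by gcongr
    _ < a * (b / a) := by gcongr
    _ = b := mul_div_cancel₀ b ha.ne'

theorem exists_norm_mem_Ioo_diff [IsAlgClosed 𝕜] {a b : ℝ} (ha : 0 ≤ a) (hab : a < b)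
    {F : Set ℝ} (hF : F.Finite) : ∃ t : 𝕜, ‖t‖ ∈ Set.Ioo a b \ F := by
  obtain ⟨s, hs⟩ := ((Set.Ioo_infinite hab).sdiff hF).nonempty
  obtain ⟨ε, hε, hball⟩ := Metric.isOpen_iff.1 (isOpen_Ioo.sdiff hF.isClosed) s hs
  obtain ⟨t, ht₁, ht₂⟩ := exists_norm_mem_Ioo (𝕜 := 𝕜) (ha.trans_lt hs.1.1)
    (lt_add_of_pos_right s hε)
  exact ⟨t, hball (by rw [Real.ball_eq_Ioo]; exact ⟨by linarith, ht₂⟩)⟩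

end NormedField

section ChordalRatio

variable {R : Type*} [CommRing R]

noncomputable def chordalRatio (f : R → ℝ) (u v : R × R) : ℝ :=
  f (u.1 * v.2 - u.2 * v.1) / (max (f u.1) (f u.2) * max (f v.1) (f v.2))

theorem chordalRatio_mem_Icc {F : Type*} [FunLike F R ℝ] [MulRingSeminormClass F R ℝ] {f : F}
    (hf : IsNonarchimedean f) (u v : R × R) : chordalRatio f u v ∈ Set.Icc 0 1 := by
  have hu : 0 ≤ max (f u.1) (f u.2) := (apply_nonneg f _).trans (le_max_left _ _)
  have hv : 0 ≤ max (f v.1) (f v.2) := (apply_nonneg f _).trans (le_max_left _ _)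
  refine ⟨div_nonneg (apply_nonneg f _) (mul_nonneg hu hv), div_le_one_of_le₀ ?_ (mul_nonneg hu hv)⟩
  rw [sub_eq_add_neg]
  refine (hf _ _).trans (max_le ?_ ?_) <;> simp only [map_neg_eq_map, map_mul]
  · exact mul_le_mul (le_max_left _ _) (le_max_right _ _) (apply_nonneg f _) hu
  · exact mul_le_mul (le_max_right _ _) (le_max_left _ _) (apply_nonneg f _) hu

theorem chordalRatio_comp_ringHom {S : Type*} [CommRing S] (f : S → ℝ) (φ : R →+* S)
    (u v : R × R) :
    chordalRatio (f ∘ φ) u v = chordalRatio f (φ u.1, φ u.2) (φ v.1, φ v.2) := by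
  simp [chordalRatio]

theorem chordalRatio_norm_smul {𝕜 : Type*} [NormedField 𝕜] {l l' : 𝕜} (hl : l ≠ 0)
    (hl' : l' ≠ 0) (u v : 𝕜 × 𝕜) :
    chordalRatio norm (l • u) (l' • v) = chordalRatio norm u v := by
  simp only [chordalRatio, Prod.smul_fst, Prod.smul_snd, smul_eq_mul, norm_mul,
    ← mul_max_of_nonneg _ _ (norm_nonneg _)]
  rw [show l * u.1 * (l' * v.2) - l * u.2 * (l' * v.1) = l * l' * (u.1 * v.2 - u.2 * v.1) by ring,
    norm_mul, norm_mul, mul_mul_mul_comm, mul_div_mul_left _ _ (by positivity)]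

end ChordalRatio

namespace BerkA1

variable {𝕜 : Type*} [NontriviallyNormedField 𝕜]

instance : FunLike (BerkA1 𝕜) 𝕜[X] ℝ where
  coe := toFun
  coe_injective x y h := by cases x; cases y; congr

instance : MulRingSeminormClass (BerkA1 𝕜) 𝕜[X] ℝ where
  map_add_le_add x := x.add_le'
  map_zero x := by
    show x.toFun 0 = 0
    simpa using x.restricts' 0
  map_neg_eq_map x p := by
    have := x.map_mul' (C (-1)) p
    rwa [x.restricts', norm_neg, norm_one, one_mul, C_neg, C_1, neg_one_mul] at this
  map_mul x := x.map_mul'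
  map_one x := by
    show x.toFun 1 = 1
    simpa using x.restricts' 1

@[simp]
theorem map_C (x : BerkA1 𝕜) (c : 𝕜) : x (C c) = ‖c‖ :=
  x.restricts' c

@[simp]
theorem _root_.evalSeminorm_apply (a : 𝕜) (p : 𝕜[X]) : evalSeminorm 𝕜 a p = ‖p.eval a‖ :=
  rfl

theorem isNonarchimedean [IsUltrametricDist 𝕜] (x : BerkA1 𝕜) : IsNonarchimedean x :=
  isNonarchimedean_of_forall_map_natCast_le_one x fun n => by
    rw [← map_natCast C n, map_C]
    exact IsUltrametricDist.norm_natCast_le_one 𝕜 n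

theorem continuous_apply (p : 𝕜[X]) : Continuous fun x : BerkA1 𝕜 => x p :=
  (_root_.continuous_apply p).comp continuous_induced_dom

theorem isClosedEmbedding_coeFn : IsClosedEmbedding ((⇑) : BerkA1 𝕜 → 𝕜[X] → ℝ) := by
  refine ⟨⟨⟨rfl⟩, DFunLike.coe_injective⟩, ?_⟩
  have hrange : Set.range ((⇑) : BerkA1 𝕜 → 𝕜[X] → ℝ) =
      {φ | ∀ p, 0 ≤ φ p} ∩ {φ | ∀ p q, φ (p * q) = φ p * φ q} ∩
        {φ | ∀ p q, φ (p + q) ≤ φ p + φ q} ∩ {φ | ∀ c, φ (C c) = ‖c‖} := by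
    ext φ
    refine ⟨?_, fun ⟨⟨⟨h₁, h₂⟩, h₃⟩, h₄⟩ => ⟨⟨φ, h₁, h₂, h₃, h₄⟩, rfl⟩⟩
    rintro ⟨x, rfl⟩
    exact ⟨⟨⟨x.nonneg', x.map_mul'⟩, x.add_le'⟩, x.restricts'⟩
  rw [hrange]
  simp only [Set.ofPred_forall]
  have hc := _root_.continuous_apply (A := fun _ : 𝕜[X] => ℝ)
  exact (((isClosed_iInter fun p => isClosed_le continuous_const (hc p)).inter
    (isClosed_iInter fun p => isClosed_iInter fun q =>
      isClosed_eq (hc _) ((hc p).mul (hc q)))).inter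
    (isClosed_iInter fun p => isClosed_iInter fun q =>
      isClosed_le (hc _) ((hc p).add (hc q)))).inter
    (isClosed_iInter fun c => isClosed_eq (hc _) continuous_const)

theorem apply_le_sum_norm_coeff_mul_pow (x : BerkA1 𝕜) (p : 𝕜[X]) :
    x p ≤ ∑ n ∈ p.support, ‖p.coeff n‖ * x X ^ n := by
  conv_lhs => rw [p.as_sum_support_C_mul_X_pow]
  refine (Finset.le_sum_of_subadditive x (map_zero x).le (map_add_le_add x) _ _).trans_eq ?_
  simp [map_mul, map_pow]

theorem isCompact_setOf_apply_X_le (R : ℝ) : IsCompact {x : BerkA1 𝕜 | x X ≤ R} := by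
  refine (isClosedEmbedding_coeFn.isCompact_preimage (isCompact_univ_pi fun p =>
    isCompact_Icc (a := 0) (b := ∑ n ∈ p.support, ‖p.coeff n‖ * R ^ n))).of_isClosed_subset
    (isClosed_le (continuous_apply X) continuous_const) fun x hx p _ => ⟨apply_nonneg x p, ?_⟩
  refine (apply_le_sum_norm_coeff_mul_pow x p).trans (Finset.sum_le_sum fun n _ => ?_)
  gcongr
  exact hx

theorem tendsto_apply_X_coclosedCompact :
    Tendsto (fun x : BerkA1 𝕜 => x X) (coclosedCompact (BerkA1 𝕜)) atTop :=
  tendsto_atTop.2 fun R => mem_of_superset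
    (hasBasis_coclosedCompact.mem_of_mem
      ⟨isClosed_le (continuous_apply X) continuous_const, isCompact_setOf_apply_X_le R⟩)
    fun x (hx : ¬x X ≤ R) => (not_le.1 hx).le

theorem dist_apply_div_pow_le (x : BerkA1 𝕜) (hx : 1 ≤ x X) {p : 𝕜[X]} {d : ℕ}
    (hp : p.natDegree ≤ d) :
    dist (x p / x X ^ d) ‖p.coeff d‖ ≤
      (∑ n ∈ (p.erase d).support, ‖(p.erase d).coeff n‖) / x X := by
  have ht : 0 < x X := one_pos.trans_le hx
  have hmono : x (monomial d (p.coeff d)) = ‖p.coeff d‖ * x X ^ d := by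
    rw [← C_mul_X_pow_eq_monomial, map_mul, map_pow, map_C]
  have hsub : |x p - x (monomial d (p.coeff d))| ≤ x (p.erase d) := by
    have := abs_sub_map_le_sub x p (monomial d (p.coeff d))
    rwa [← eq_sub_of_add_eq' (p.monomial_add_erase d)] at this
  have herase : x (p.erase d) * x X ≤
      (∑ n ∈ (p.erase d).support, ‖(p.erase d).coeff n‖) * x X ^ d := by
    refine (mul_le_mul_of_nonneg_right (apply_le_sum_norm_coeff_mul_pow x _) ht.le).trans ?_
    rw [Finset.sum_mul, Finset.sum_mul]
    refine Finset.sum_le_sum fun n hn => ?_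
    rw [support_erase, Finset.mem_erase] at hn
    have hnd : n < d := lt_of_le_of_ne ((le_natDegree_of_mem_supp n hn.2).trans hp) hn.1
    rw [mul_assoc, ← pow_succ]
    gcongr
    exact hnd
  have hdiv : x p / x X ^ d - ‖p.coeff d‖ = (x p - x (monomial d (p.coeff d))) / x X ^ d := by
    rw [hmono]
    field_simp
  rw [Real.dist_eq, hdiv, abs_div, abs_of_pos (pow_pos ht d), div_le_div_iff₀ (pow_pos ht d) ht]
  exact (mul_le_mul_of_nonneg_right hsub ht.le).trans herase

theorem tendsto_apply_div_pow {l : Filter (BerkA1 𝕜)} (hl : Tendsto (fun x => x X) l atTop)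
    {p : 𝕜[X]} {d : ℕ} (hp : p.natDegree ≤ d) :
    Tendsto (fun x => x p / x X ^ d) l (𝓝 ‖p.coeff d‖) :=
  tendsto_iff_dist_tendsto_zero.2 <| squeeze_zero' (Eventually.of_forall fun _ => dist_nonneg)
    ((hl.eventually_ge_atTop 1).mono fun x hx => dist_apply_div_pow_le x hx hp)
    (tendsto_const_nhds.div_atTop hl)

theorem max_apply_pos_of_isCoprime (x : BerkA1 𝕜) {p q : 𝕜[X]} (h : IsCoprime p q) :
    0 < max (x p) (x q) := by
  obtain ⟨u, v, huv⟩ := h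
  by_contra! hle
  have hp : x p = 0 := le_antisymm ((le_max_left _ _).trans hle) (apply_nonneg x p)
  have hq : x q = 0 := le_antisymm ((le_max_right _ _).trans hle) (apply_nonneg x q)
  have := map_add_le_add x (u * p) (v * q)
  rw [huv, map_one, map_mul, map_mul, hp, hq] at this
  norm_num at this

theorem continuous_chordalRatio {P Q : 𝕜[X] × 𝕜[X]} (hP : IsCoprime P.1 P.2)
    (hQ : IsCoprime Q.1 Q.2) : Continuous fun x : BerkA1 𝕜 => chordalRatio x P Q :=
  (continuous_apply _).div
    (((continuous_apply _).max (continuous_apply _)).mul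
      ((continuous_apply _).max (continuous_apply _)))
    fun x => (mul_pos (x.max_apply_pos_of_isCoprime hP) (x.max_apply_pos_of_isCoprime hQ)).ne'

theorem apply_eq_mul_prod_roots [IsAlgClosed 𝕜] (x : BerkA1 𝕜) (p : 𝕜[X]) :
    x p = ‖p.leadingCoeff‖ * (p.roots.map fun c => x (X - C c)).prod := by
  conv_lhs => rw [(IsAlgClosed.splits p).eq_prod_roots]
  rw [map_mul, map_C, map_multiset_prod, Multiset.map_map]
  rfl

theorem apply_X_sub_C_eq_max [IsUltrametricDist 𝕜] (x : BerkA1 𝕜) {b c : 𝕜}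
    (hbc : x (X - C b) ≤ x (X - C c)) : x (X - C c) = max (x (X - C b)) ‖b - c‖ := by
  refine le_antisymm ?_ (max_le hbc ?_)
  · calc x (X - C c) = x ((X - C b) + C (b - c)) := by rw [C_sub]; ring_nf
      _ ≤ max (x (X - C b)) (x (C (b - c))) := x.isNonarchimedean _ _
      _ = max (x (X - C b)) ‖b - c‖ := by rw [map_C]
  · calc ‖b - c‖ = x ((X - C c) + -(X - C b)) := by rw [← map_C x, C_sub]; ring_nf
      _ ≤ max (x (X - C c)) (x (-(X - C b))) := x.isNonarchimedean _ _
      _ = x (X - C c) := by rw [map_neg_eq_map, max_eq_left hbc]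

theorem exists_forall_dist_norm_sub_lt [IsAlgClosed 𝕜] [IsUltrametricDist 𝕜] (x : BerkA1 𝕜)
    (T : Finset 𝕜) {δ : ℝ} (hδ : 0 < δ) :
    ∃ a : 𝕜, ∀ c ∈ T, dist ‖a - c‖ (x (X - C c)) < δ := by
  rcases T.eq_empty_or_nonempty with rfl | hT
  · exact ⟨0, by simp⟩
  obtain ⟨b, -, hb⟩ := T.exists_min_image (fun c => x (X - C c)) hT
  obtain ⟨t, ⟨ht₁, ht₂⟩, htT⟩ := exists_norm_mem_Ioo_diff (𝕜 := 𝕜) (apply_nonneg x (X - C b))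
    (lt_add_of_pos_right _ hδ) (T.finite_toSet.image fun c => ‖b - c‖)
  refine ⟨b + t, fun c hc => ?_⟩
  have hne : ‖t‖ ≠ ‖b - c‖ := fun h => htT ⟨c, hc, h.symm⟩
  rw [show b + t - c = t + (b - c) by ring, IsUltrametricDist.norm_add_eq_max_of_norm_ne_norm hne,
    apply_X_sub_C_eq_max x (hb c hc), Real.dist_eq]
  exact (abs_max_sub_max_le_abs _ _ _).trans_lt (abs_sub_lt_iff.2 ⟨by linarith, by linarith⟩)

theorem denseRange_evalSeminorm [IsAlgClosed 𝕜] [IsUltrametricDist 𝕜] :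
    DenseRange (evalSeminorm 𝕜) := by
  intro x
  set F : (𝕜 → ℝ) → 𝕜[X] → ℝ := fun r p => ‖p.leadingCoeff‖ * (p.roots.map r).prod
  have hF : Continuous F := continuous_pi fun p =>
    continuous_const.mul (continuous_multiset_prod _ fun c _ => _root_.continuous_apply c)
  have hfactor (y : BerkA1 𝕜) : ⇑y = F fun c => y (X - C c) :=
    funext (apply_eq_mul_prod_roots y)
  have hradii : (fun c => x (X - C c)) ∈ closure (Set.range fun a c : 𝕜 => ‖a - c‖) :=
    mem_closure_pi_of_forall_finset fun T _ hδ =>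
      let ⟨a, ha⟩ := exists_forall_dist_norm_sub_lt x T hδ
      ⟨_, ⟨a, rfl⟩, ha⟩
  rw [isClosedEmbedding_coeFn.isInducing.closure_eq_preimage_closure_image, Set.mem_preimage,
    hfactor x]
  refine map_mem_closure hF hradii ?_
  rintro _ ⟨a, rfl⟩
  refine ⟨evalSeminorm 𝕜 a, ⟨a, rfl⟩, ?_⟩
  rw [hfactor]
  simp

end BerkA1

section ChordalExtension

variable {𝕜 : Type*} [NontriviallyNormedField 𝕜]

theorem denseRange_iota [IsAlgClosed 𝕜] [IsUltrametricDist 𝕜] : DenseRange (iota 𝕜) := by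
  intro S
  induction S using OnePoint.rec with
  | infty => exact subset_closure ⟨OnePoint.infty, rfl⟩
  | coe x =>
    exact map_mem_closure OnePoint.continuous_coe (BerkA1.denseRange_evalSeminorm x)
      (by rintro _ ⟨a, rfl⟩; exact ⟨a, rfl⟩)

theorem natDegree_num_le_rdeg (f : RatFunc 𝕜) : f.num.natDegree ≤ rdeg 𝕜 f :=
  le_max_left _ _

theorem natDegree_denom_le_rdeg (f : RatFunc 𝕜) : f.denom.natDegree ≤ rdeg 𝕜 f :=
  le_max_right _ _

/-- Homogeneous coordinates of `f(∞)`, up to a nonzero factor. -/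
noncomputable def coordsAtInfty (f : RatFunc 𝕜) : 𝕜 × 𝕜 :=
  (f.num.coeff (rdeg 𝕜 f), f.denom.coeff (rdeg 𝕜 f))

@[simp]
theorem homCoord_infty : homCoord 𝕜 OnePoint.infty = (1, 0) :=
  rfl

@[simp]
theorem homCoord_coe (a : 𝕜) : homCoord 𝕜 a = (a, 1) :=
  rfl

theorem evalP1_infty (f : RatFunc 𝕜) :
    evalP1 𝕜 f OnePoint.infty = if f.denom.natDegree < f.num.natDegree then OnePoint.infty
      else ((f.num.coeff f.denom.natDegree / f.denom.leadingCoeff : 𝕜) : OnePoint 𝕜) :=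
  rfl

theorem evalP1_coe (f : RatFunc 𝕜) (a : 𝕜) :
    evalP1 𝕜 f a = if f.denom.eval a = 0 then OnePoint.infty
      else ((f.num.eval a / f.denom.eval a : 𝕜) : OnePoint 𝕜) :=
  rfl

theorem homCoord_ne_zero (z : OnePoint 𝕜) : homCoord 𝕜 z ≠ 0 := by
  induction z using OnePoint.rec <;> simp

theorem exists_eval_eq_smul_homCoord (f : RatFunc 𝕜) (a : 𝕜) :
    ∃ l ≠ (0 : 𝕜), (f.num.eval a, f.denom.eval a) = l • homCoord 𝕜 (evalP1 𝕜 f a) := by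
  by_cases hd : f.denom.eval a = 0
  · have hn : f.num.eval a ≠ 0 :=
      (isCoprime_zero_right.1 (hd ▸ f.isCoprime_num_denom.map (evalRingHom a))).ne_zero
    exact ⟨_, hn, by simp [evalP1_coe, hd]⟩
  · exact ⟨_, hd, by simp [evalP1_coe, hd, mul_div_cancel₀ _ hd]⟩

theorem exists_coordsAtInfty_eq_smul_homCoord (f : RatFunc 𝕜) :
    ∃ l ≠ (0 : 𝕜), coordsAtInfty f = l • homCoord 𝕜 (evalP1 𝕜 f OnePoint.infty) := by
  by_cases hlt : f.denom.natDegree < f.num.natDegree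
  · have hn : f.num ≠ 0 := by rintro h; simp [h] at hlt
    refine ⟨f.num.leadingCoeff, leadingCoeff_ne_zero.2 hn, ?_⟩
    simp [coordsAtInfty, evalP1_infty, hlt, rdeg, max_eq_left hlt.le,
      coeff_eq_zero_of_natDegree_lt hlt]
  · have hd : f.denom.leadingCoeff ≠ 0 := leadingCoeff_ne_zero.2 f.denom_ne_zero
    refine ⟨_, hd, ?_⟩
    simp [coordsAtInfty, evalP1_infty, hlt, rdeg, max_eq_right (not_lt.1 hlt), mul_div_cancel₀ _ hd]

theorem chordalRatio_eq_chordal_of_smul {u v : 𝕜 × 𝕜} {z w : OnePoint 𝕜}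
    (hu : ∃ l ≠ (0 : 𝕜), u = l • homCoord 𝕜 z) (hv : ∃ l ≠ (0 : 𝕜), v = l • homCoord 𝕜 w) :
    chordalRatio norm u v = chordal 𝕜 z w := by
  obtain ⟨l, hl, rfl⟩ := hu
  obtain ⟨l', hl', rfl⟩ := hv
  exact chordalRatio_norm_smul hl hl' _ _

theorem max_norm_coordsAtInfty_pos (f : RatFunc 𝕜) :
    0 < max ‖(coordsAtInfty f).1‖ ‖(coordsAtInfty f).2‖ := by
  obtain ⟨l, hl, h⟩ := exists_coordsAtInfty_eq_smul_homCoord f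
  rw [← Prod.norm_def, norm_pos_iff, h]
  exact smul_ne_zero hl (homCoord_ne_zero _)

theorem BerkA1.tendsto_chordalRatio_num_denom {l : Filter (BerkA1 𝕜)}
    (hl : Tendsto (fun x => x X) l atTop) (f g : RatFunc 𝕜) :
    Tendsto (fun x : BerkA1 𝕜 => chordalRatio x (f.num, f.denom) (g.num, g.denom)) l
      (𝓝 (chordalRatio norm (coordsAtInfty f) (coordsAtInfty g))) := by
  have hmax (h : RatFunc 𝕜) : Tendsto (fun x : BerkA1 𝕜 => max (x h.num) (x h.denom) /
      x X ^ rdeg 𝕜 h) l (𝓝 (max ‖(coordsAtInfty h).1‖ ‖(coordsAtInfty h).2‖)) := by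
    refine ((tendsto_apply_div_pow hl (natDegree_num_le_rdeg h)).max
      (tendsto_apply_div_pow hl (natDegree_denom_le_rdeg h))).congr fun x => ?_
    exact max_div_div_right (pow_nonneg (apply_nonneg x X) _) _ _
  have hdeg : (f.num * g.denom - f.denom * g.num).natDegree ≤ rdeg 𝕜 f + rdeg 𝕜 g :=
    (natDegree_sub_le _ _).trans <| max_le
      (natDegree_mul_le_of_le (natDegree_num_le_rdeg f) (natDegree_denom_le_rdeg g))
      (natDegree_mul_le_of_le (natDegree_denom_le_rdeg f) (natDegree_num_le_rdeg g))
  have hnum := tendsto_apply_div_pow hl hdeg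
  rw [coeff_sub, coeff_mul_add_eq_of_natDegree_le (natDegree_num_le_rdeg f)
    (natDegree_denom_le_rdeg g), coeff_mul_add_eq_of_natDegree_le (natDegree_denom_le_rdeg f)
    (natDegree_num_le_rdeg g)] at hnum
  refine (hnum.div ((hmax f).mul (hmax g))
    (mul_pos (max_norm_coordsAtInfty_pos f) (max_norm_coordsAtInfty_pos g)).ne').congr' ?_
  filter_upwards [hl.eventually_gt_atTop 0] with x hx
  simp only [Pi.div_apply, chordalRatio, pow_add]
  field_simp

noncomputable def chordalExt (f g : RatFunc 𝕜) : BerkP1 𝕜 → ℝ :=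
  OnePoint.rec (chordalRatio norm (coordsAtInfty f) (coordsAtInfty g))
    fun x => chordalRatio x (f.num, f.denom) (g.num, g.denom)

theorem chordalExt_iota (f g : RatFunc 𝕜) (w : OnePoint 𝕜) :
    chordalExt f g (iota 𝕜 w) = chordal 𝕜 (evalP1 𝕜 f w) (evalP1 𝕜 g w) := by
  induction w using OnePoint.rec with
  | infty =>
    exact chordalRatio_eq_chordal_of_smul (exists_coordsAtInfty_eq_smul_homCoord f)
      (exists_coordsAtInfty_eq_smul_homCoord g)
  | coe a =>
    exact (chordalRatio_comp_ringHom norm (evalRingHom a) _ _).trans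
      (chordalRatio_eq_chordal_of_smul (exists_eval_eq_smul_homCoord f a)
        (exists_eval_eq_smul_homCoord g a))

theorem chordalExt_mem_Icc [IsUltrametricDist 𝕜] (f g : RatFunc 𝕜) (S : BerkP1 𝕜) :
    chordalExt f g S ∈ Set.Icc 0 1 := by
  induction S using OnePoint.rec with
  | infty =>
    exact chordalRatio_mem_Icc (f := NormedField.toMulRingNorm 𝕜)
      IsUltrametricDist.isNonarchimedean_norm _ _
  | coe x => exact chordalRatio_mem_Icc x.isNonarchimedean _ _

theorem continuous_chordalExt (f g : RatFunc 𝕜) : Continuous (chordalExt f g) :=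
  (OnePoint.continuous_iff _).2
    ⟨BerkA1.tendsto_chordalRatio_num_denom BerkA1.tendsto_apply_X_coclosedCompact f g,
      BerkA1.continuous_chordalRatio f.isCoprime_num_denom g.isCoprime_num_denom⟩

end ChordalExtension

theorem chordal_pair_extends_continuously (f g : RatFunc K) :
    ∃ Φ : BerkP1 K → ℝ, Continuous Φ ∧ (∀ S : BerkP1 K, Φ S ∈ Set.Icc (0 : ℝ) 1) ∧
      (∀ w : OnePoint K, Φ (iota K w) = chordal K (evalP1 K f w) (evalP1 K g w)) ∧
      ∀ Ψ : BerkP1 K → ℝ, Continuous Ψ →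
        (∀ w : OnePoint K, Ψ (iota K w) = chordal K (evalP1 K f w) (evalP1 K g w)) →
          Ψ = Φ :=
  ⟨chordalExt f g, continuous_chordalExt f g, chordalExt_mem_Icc f g, chordalExt_iota f g,
    fun Ψ hΨ hΨι => denseRange_iota.equalizer hΨ (continuous_chordalExt f g)
      (funext fun w => (hΨι w).trans (chordalExt_iota f g w).symm)⟩
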